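/- Let G be a graph and v a vertex of degree δ whose neighbors are v₁,...,v_δ, with Δ(G) ≤ d−2 where d is the number of vertices. Then the number of 4-cycles of G passing through v is at most (d−4)·C(δ,2) + ⌊δ/2⌋. -/

import Mathlib

open SimpleGraph

variable {V : Type*}

/-- Number of 4-cycle subgraphs of `G`: each 4-cycle corresponds to 8 ordered
tuples `(a,b,c,d)` of vertices with `a~b~c~d~a` and `a ≠ c`, `b ≠ d`. -/
noncomputable def c4 (G : SimpleGraph V) : ℕ :=
  Nat.card {p : V × V × V × V //
    G.Adj p.1 p.2.1 ∧ G.Adj p.2.1 p.2.2.1 ∧ G.Adj p.2.2.1 p.2.2.2 ∧ G.Adj p.2.2.2 p.1 ∧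
    p.1 ≠ p.2.2.1 ∧ p.2.1 ≠ p.2.2.2} / 8

/-- Number of `K₄` subgraphs of `G`, i.e. of 4-element cliques. -/
noncomputable def k4 (G : SimpleGraph V) : ℕ :=
  Nat.card {s : Finset V // G.IsNClique 4 s}

/-- Number of edges of `G`. -/
noncomputable def edgeCount (G : SimpleGraph V) : ℕ := Nat.card G.edgeSet

/-- Degree of the vertex `v` in `G`. -/
noncomputable def deg (G : SimpleGraph V) (v : V) : ℕ := Nat.card (G.neighborSet v)

/-- Minimum degree of `G`. -/
noncomputable def minDeg (G : SimpleGraph V) : ℕ := sInf (Set.range (deg G))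

/-- Maximum degree of `G`. -/
noncomputable def maxDeg (G : SimpleGraph V) : ℕ := sSup (Set.range (deg G))

/-- Clique number of `G`. -/
noncomputable def cliqueNum (G : SimpleGraph V) : ℕ :=
  sSup {n | ∃ s : Finset V, G.IsNClique n s}

/-- `G` has at least one odd cycle. -/
def HasOddCycle (G : SimpleGraph V) : Prop :=
  ∃ (v : V) (w : G.Walk v v), w.IsCycle ∧ Odd w.length

/-- Number of triangles of `G` containing both vertices `i` and `j`
(for an edge `{i,j}`, the number of common neighbors of `i` and `j`). -/
noncomputable def c3edge (G : SimpleGraph V) (i j : V) : ℕ :=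
  Nat.card {k : V // G.Adj i k ∧ G.Adj j k}

/-- Number of 4-cycles of `G` containing the edge `{i,j}`: such a cycle
`i - j - k - l - i` is determined by the ordered pair `(k,l)`. -/
noncomputable def c4edge (G : SimpleGraph V) (i j : V) : ℕ :=
  Nat.card {p : V × V // G.Adj j p.1 ∧ G.Adj p.1 p.2 ∧ G.Adj p.2 i ∧ p.1 ≠ i ∧ p.2 ≠ j}

/-- Number of 4-cycles of `G` passing through the vertex `v`. -/
noncomputable def c4vertex (G : SimpleGraph V) (v : V) : ℕ :=
  Nat.card {p : V × V × V // G.Adj v p.1 ∧ G.Adj p.1 p.2.1 ∧ G.Adj p.2.1 p.2.2 ∧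
    G.Adj p.2.2 v ∧ p.1 ≠ p.2.2 ∧ v ≠ p.2.1} / 2

/-!
A 4-cycle `v – i – k – j – v` is determined by the ordered pair `(i, j)` of distinct neighbours
of `v` together with a common neighbour `k ≠ v` of `i` and `j`, and each cycle arises from two
such pairs; so twice the count is `∑ s_{ij}` over ordered pairs. As `v ∈ N(i)`, the degree bound
gives `s_{ij} ≤ deg i - 1 ≤ d - 3`. Equality forces `N(i) = {v} ∪ (N(i) ∩ N(j))`, so `j` is the
only vertex other than `i` outside `N(i)`: each `i` has at most one such partner. The pairs
attaining `d - 3` are closed under swapping, hence even in number, and at most `δ`, hence at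
most `2⌊δ/2⌋`.
-/

open Finset

lemma Finset.even_card_of_involution {α : Type*} {s : Finset α} (f : α → α)
    (hf : ∀ a ∈ s, f a ∈ s) (hinv : ∀ a ∈ s, f (f a) = a) (hne : ∀ a ∈ s, f a ≠ a) :
    Even #s := by
  rw [← ZMod.natCast_eq_zero_iff_even, card_eq_sum_ones, Nat.cast_sum, Nat.cast_one]
  exact sum_involution (fun a _ ↦ f a) (fun _ _ ↦ by decide) (fun a ha _ ↦ hne a ha) hf hinv

lemma deg_eq_degree [Fintype V] (G : SimpleGraph V) [DecidableRel G.Adj] (v : V) :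
    deg G v = G.degree v := by
  rw [deg, Nat.card_eq_fintype_card, card_neighborSet_eq_degree]

lemma degree_le_maxDeg [Fintype V] (G : SimpleGraph V) [DecidableRel G.Adj] (v : V) :
    G.degree v ≤ maxDeg G :=
  deg_eq_degree G v ▸ le_csSup (Set.finite_range _).bddAbove ⟨v, rfl⟩

section OtherCommonNeighbors

variable [Fintype V] [DecidableEq V] (G : SimpleGraph V) [DecidableRel G.Adj] (v : V)

/-- The paper's `s_{ij}` is the cardinality of this set. -/
def otherCommonNeighbors (i j : V) : Finset V :=
  (G.neighborFinset i ∩ G.neighborFinset j).erase v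

/-- Pairs with `s_{ij} = |V| - 3`, the largest value the degree bound allows. -/
def saturatedPairs : Finset (V × V) :=
  (G.neighborFinset v).offDiag.filter
    fun q ↦ #(otherCommonNeighbors G v q.1 q.2) + 3 = Fintype.card V

variable {G v}

lemma mem_otherCommonNeighbors {i j k : V} :
    k ∈ otherCommonNeighbors G v i j ↔ k ≠ v ∧ G.Adj i k ∧ G.Adj j k := by
  simp [otherCommonNeighbors]

lemma otherCommonNeighbors_comm (i j : V) :
    otherCommonNeighbors G v i j = otherCommonNeighbors G v j i := by
  rw [otherCommonNeighbors, otherCommonNeighbors, inter_comm]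

variable (G v) in
lemma c4vertex_eq_sum_card_otherCommonNeighbors_div_two :
    c4vertex G v =
      (∑ q ∈ (G.neighborFinset v).offDiag, #(otherCommonNeighbors G v q.1 q.2)) / 2 := by
  rw [c4vertex, Nat.card_eq_fintype_card, Fintype.card_subtype, ← card_sigma]
  congr 1
  refine card_nbij' (fun p ↦ ⟨(p.1, p.2.2), p.2.1⟩) (fun x ↦ (x.1.1, x.2, x.1.2))
    (fun ⟨a, b, c⟩ h ↦ ?_) (fun ⟨⟨a, c⟩, b⟩ h ↦ ?_) (fun _ _ ↦ rfl) (fun _ _ ↦ rfl)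
  all_goals
    simp only [coe_filter, coe_sigma, Set.mem_sigma_iff, mem_coe, mem_univ, true_and,
      Set.mem_ofPred_eq, mem_offDiag, mem_neighborFinset, mem_otherCommonNeighbors] at h ⊢
    grind [G.adj_symm]

lemma card_otherCommonNeighbors_lt_degree {i : V} (hvi : G.Adj i v) (j : V) :
    #(otherCommonNeighbors G v i j) < G.degree i := by
  refine card_lt_card ⟨fun k hk ↦ ?_, fun h ↦ ?_⟩
  · exact (G.mem_neighborFinset i k).2 (mem_otherCommonNeighbors.1 hk).2.1
  · exact (mem_otherCommonNeighbors.1 (h ((G.mem_neighborFinset i v).2 hvi))).1 rfl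

lemma neighborFinset_eq_insert_of_saturated {i j : V} (hvi : G.Adj i v)
    (hΔ : G.degree i ≤ Fintype.card V - 2)
    (hsat : #(otherCommonNeighbors G v i j) + 3 = Fintype.card V) :
    G.neighborFinset i = insert v (otherCommonNeighbors G v i j) := by
  refine (eq_of_subset_of_card_le (insert_subset_iff.2 ⟨?_, fun k hk ↦ ?_⟩) ?_).symm
  · exact (G.mem_neighborFinset i v).2 hvi
  · exact (G.mem_neighborFinset i k).2 (mem_otherCommonNeighbors.1 hk).2.1
  · rw [card_insert_of_notMem (by simp [mem_otherCommonNeighbors])]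
    exact (card_neighborFinset_eq_degree G i).trans_le (by omega)

/-- A saturated pair forces `i` to have degree `|V| - 2`, with `j` its only non-neighbour
besides `i` itself. -/
lemma eq_of_saturated {i j j' : V} (hvi : G.Adj i v) (hΔ : G.degree i ≤ Fintype.card V - 2)
    (hj : j ≠ v) (hj' : j' ≠ v) (hij : i ≠ j) (hij' : i ≠ j')
    (hsat : #(otherCommonNeighbors G v i j) + 3 = Fintype.card V)
    (hsat' : #(otherCommonNeighbors G v i j') + 3 = Fintype.card V) : j = j' := by
  have hN := neighborFinset_eq_insert_of_saturated hvi hΔ hsat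
  have hnonadj {k : V} (hk : k ≠ v) (hik : i ≠ k)
      (hsatk : #(otherCommonNeighbors G v i k) + 3 = Fintype.card V) :
      k ∈ univ \ insert i (G.neighborFinset i) := by
    rw [neighborFinset_eq_insert_of_saturated hvi hΔ hsatk]
    simp [hk, hik.symm, mem_otherCommonNeighbors]
  have hcard : #(univ \ insert i (G.neighborFinset i)) ≤ 1 := by
    rw [card_univ_sdiff, card_insert_of_notMem (by simp), hN,
      card_insert_of_notMem (by simp [mem_otherCommonNeighbors])]
    omega
  exact card_le_one.1 hcard _ (hnonadj hj hij hsat) _ (hnonadj hj' hij' hsat')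

lemma card_otherCommonNeighbors_le_sub_four_add_ite {i : V} (hvi : G.Adj i v)
    (hΔ : G.degree i ≤ Fintype.card V - 2) (j : V) :
    #(otherCommonNeighbors G v i j) ≤ (Fintype.card V - 4) +
      if #(otherCommonNeighbors G v i j) + 3 = Fintype.card V then 1 else 0 := by
  have := card_otherCommonNeighbors_lt_degree hvi j
  split_ifs <;> omega

lemma card_saturatedPairs_le (hΔ : ∀ w, G.degree w ≤ Fintype.card V - 2) :
    #(saturatedPairs G v) ≤ 2 * (G.degree v / 2) := by
  have hmem {i j : V} : (i, j) ∈ saturatedPairs G v ↔ G.Adj v i ∧ G.Adj v j ∧ i ≠ j ∧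
      #(otherCommonNeighbors G v i j) + 3 = Fintype.card V := by
    simp [saturatedPairs, and_assoc]
  have heven : Even #(saturatedPairs G v) := by
    refine even_card_of_involution Prod.swap (fun ⟨i, j⟩ h ↦ ?_) (fun _ _ ↦ rfl)
      (fun ⟨i, j⟩ h ↦ ?_)
    · obtain ⟨hi, hj, hij, hsat⟩ := hmem.1 h
      exact hmem.2 ⟨hj, hi, hij.symm, by rwa [otherCommonNeighbors_comm]⟩
    · exact fun heq ↦ (hmem.1 h).2.2.1 (Prod.ext_iff.1 heq).2
  have hle : #(saturatedPairs G v) ≤ G.degree v := by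
    rw [← card_neighborFinset_eq_degree]
    refine card_le_card_of_injOn Prod.fst
      (fun ⟨i, j⟩ h ↦ (G.mem_neighborFinset v i).2 (hmem.1 h).1)
      (fun ⟨i, j⟩ h ⟨i', j'⟩ h' hii' ↦ ?_)
    obtain rfl : i = i' := hii'
    obtain ⟨hi, hj, hij, hsat⟩ := hmem.1 h
    obtain ⟨-, hj', hij', hsat'⟩ := hmem.1 h'
    rw [eq_of_saturated hi.symm (hΔ i) hj.ne' hj'.ne' hij hij' hsat hsat']
  obtain ⟨m, hm⟩ := heven
  omega

end OtherCommonNeighbors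

/-- Let `G` be a graph on `d` vertices with `Δ(G) ≤ d − 2` and
`v` a vertex of degree `δ`. Then the number of 4-cycles of `G` through `v` is
at most `(d−4)·C(δ,2) + ⌊δ/2⌋`. -/
theorem c4vertex_bound [Fintype V] (G : SimpleGraph V) (d : ℕ)
    (hd : d = Fintype.card V) (hΔ : maxDeg G ≤ d - 2) (v : V) (δ : ℕ)
    (hδ : δ = deg G v) :
    c4vertex G v ≤ (d - 4) * Nat.choose δ 2 + δ / 2 := by
  classical
  subst hd hδ
  set N := G.neighborFinset v
  have hΔ' (w : V) : G.degree w ≤ Fintype.card V - 2 := (degree_le_maxDeg G w).trans hΔ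
  have hoffDiag : #N.offDiag = 2 * (G.degree v).choose 2 := by
    rw [← Sym2.two_mul_card_image_offDiag, Sym2.card_image_offDiag,
      card_neighborFinset_eq_degree]
  calc c4vertex G v
      = (∑ q ∈ N.offDiag, #(otherCommonNeighbors G v q.1 q.2)) / 2 :=
        c4vertex_eq_sum_card_otherCommonNeighbors_div_two G v
    _ ≤ ((Fintype.card V - 4) * #N.offDiag + #(saturatedPairs G v)) / 2 := by
        refine Nat.div_le_div_right ((sum_le_sum fun q hq ↦
          card_otherCommonNeighbors_le_sub_four_add_ite
            ((G.mem_neighborFinset v _).1 (mem_offDiag.1 hq).1).symm (hΔ' q.1) q.2).trans_eq ?_)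
        rw [sum_add_distrib, sum_const, smul_eq_mul, mul_comm, ← card_filter]
        rfl
    _ ≤ (Fintype.card V - 4) * (deg G v).choose 2 + deg G v / 2 := by
        have := card_saturatedPairs_le (v := v) hΔ'
        rw [hoffDiag, mul_left_comm, deg_eq_degree]
        omega
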